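/- Fair-path characterization of the strong basin: let A be an attractor of an asynchronous Boolean network with n ≥ 1 nodes. A state x belongs to the strong basin basS(A) if and only if every fair infinite path starting at x eventually visits A (i.e., for every fair infinite path π with π 0 = x there exists k with π k ∈ A). -/

import Mathlib

/-- Asynchronous transition relation of a Boolean network with update
functions `f`: `s → s'` iff `s' = Function.update s i (f i s)` for some `i`. -/
def BNStep {n : ℕ} (f : Fin n → (Fin n → Bool) → Bool)
    (s s' : Fin n → Bool) : Prop :=
  ∃ i : Fin n, s' = Function.update s i (f i s)

/-- The set of states reachable from `s` (reflexive-transitive closure). -/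
def BNReach {n : ℕ} (f : Fin n → (Fin n → Bool) → Bool)
    (s : Fin n → Bool) : Set (Fin n → Bool) :=
  {s' | Relation.ReflTransGen (BNStep f) s s'}

/-- An attractor: a nonempty set `A` with `reach s = A` for every `s ∈ A`. -/
def IsAttractor {n : ℕ} (f : Fin n → (Fin n → Bool) → Bool)
    (A : Set (Fin n → Bool)) : Prop :=
  A.Nonempty ∧ ∀ s ∈ A, BNReach f s = A

/-- Weak basin of `A`. -/
def basW {n : ℕ} (f : Fin n → (Fin n → Bool) → Bool)
    (A : Set (Fin n → Bool)) : Set (Fin n → Bool) :=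
  {s | (BNReach f s ∩ A).Nonempty}

/-- Strong basin of `A`. -/
def basS {n : ℕ} (f : Fin n → (Fin n → Bool) → Bool)
    (A : Set (Fin n → Bool)) : Set (Fin n → Bool) :=
  {s | (BNReach f s ∩ A).Nonempty ∧
    ∀ A' : Set (Fin n → Bool), IsAttractor f A' → A' ≠ A → BNReach f s ∩ A' = ∅}

/-- An infinite path of the asynchronous dynamics. -/
def IsPath {n : ℕ} (f : Fin n → (Fin n → Bool) → Bool)
    (π : ℕ → Fin n → Bool) : Prop :=
  ∀ k : ℕ, BNStep f (π k) (π (k + 1))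

/-- `x` occurs infinitely often in `π`. -/
def InfOften {n : ℕ} (π : ℕ → Fin n → Bool) (x : Fin n → Bool) : Prop :=
  ∀ i : ℕ, ∃ j ≥ i, π j = x

/-- Fairness: every successor of every infinitely-often state occurs
infinitely often. -/
def Fair {n : ℕ} (f : Fin n → (Fin n → Bool) → Bool)
    (π : ℕ → Fin n → Bool) : Prop :=
  ∀ x : Fin n → Bool, InfOften π x →
    ∀ x' : Fin n → Bool, BNStep f x x' → InfOften π x'

/-- Applying a control `C = (O, I)` to a state. -/
def applyC {n : ℕ} (O I : Finset (Fin n)) (s : Fin n → Bool) : Fin n → Bool :=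
  fun i => if i ∈ O then false else if i ∈ I then true else s i

/-- The restricted state space `S|C`. -/
def restrC {n : ℕ} (O I : Finset (Fin n)) : Set (Fin n → Bool) :=
  {s | (∀ i ∈ O, s i = false) ∧ (∀ i ∈ I, s i = true)}

/-- Update functions of the controlled network `G|C`. -/
def ctrlF {n : ℕ} (f : Fin n → (Fin n → Bool) → Bool) (O I : Finset (Fin n)) :
    Fin n → (Fin n → Bool) → Bool :=
  fun i s => if i ∈ O then false else if i ∈ I then true else f i s

/-- `C` is a temporary target control for `At`: for every source state `s`,
every fair infinite path of the controlled network `G|C` starting from `C(s)`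
eventually reaches the strong basin of `At` in the original network. -/
def IsTTC {n : ℕ} (f : Fin n → (Fin n → Bool) → Bool) (O I : Finset (Fin n))
    (At : Set (Fin n → Bool)) : Prop :=
  ∀ s : Fin n → Bool, ∀ π : ℕ → Fin n → Bool,
    π 0 = applyC O I s → IsPath (ctrlF f O I) π → Fair (ctrlF f O I) π →
    ∃ k : ℕ, π k ∈ basS f At

/-! Along a fair path, the states occurring infinitely often form an attractor reachable from the
start, so from a state of the strong basin of `A` that attractor is `A`. Conversely, from any state
`x` and any attractor `B` reachable from `x` one can walk into `B` and then cycle through all of its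
states forever; such a path is fair, so if every fair path from `x` meets `A`, it meets `A` inside
`B`, forcing `B = A`. -/

namespace Relation

variable {α : Type*} {r : α → α → Prop} {a b : α}

theorem TransGen.exists_walk (h : TransGen r a b) :
    ∃ L > 0, ∃ w : ℕ → α, w 0 = a ∧ w L = b ∧ ∀ j < L, r (w j) (w (j + 1)) := by
  induction h using TransGen.head_induction_on with
  | single hab => exact ⟨1, one_pos, fun | 0 => _ | _ + 1 => b, rfl, rfl, fun | 0, _ => hab⟩
  | @head a c hac _ ih =>
    obtain ⟨L, -, w, hw0, hwL, hw⟩ := ih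
    refine ⟨L + 1, L.succ_pos, fun | 0 => a | j + 1 => w j, rfl, hwL, ?_⟩
    rintro (_ | j) hj
    · exact show r a (w 0) from hw0 ▸ hac
    · exact hw j (by omega)

/-- The walks from `e k` to `e (k + 1)` are run one after another; `(k, j)` records the position
`j` on the `k`-th walk. -/
theorem exists_path_through_of_transGen (e : ℕ → α) (he : ∀ k, TransGen r (e k) (e (k + 1))) :
    ∃ π : ℕ → α, π 0 = e 0 ∧ (∀ t, r (π t) (π (t + 1))) ∧ ∀ k, ∃ t ≥ k, π t = e k := by
  choose L hL w hw0 hwL hw using fun k => (he k).exists_walk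
  let next : ℕ × ℕ → ℕ × ℕ := fun p => if p.2 + 1 < L p.1 then (p.1, p.2 + 1) else (p.1 + 1, 0)
  let pos : ℕ → ℕ × ℕ := fun t => next^[t] (0, 0)
  have pos_succ (t : ℕ) : pos (t + 1) = next (pos t) := Function.iterate_succ_apply' _ _ _
  have pos_lt (t : ℕ) : (pos t).2 < L (pos t).1 := by
    induction t with
    | zero => exact hL 0
    | succ t ih =>
      rw [pos_succ]
      simp only [next]
      split_ifs with h
      · exact h
      · exact hL _
  have step (p : ℕ × ℕ) (hp : p.2 < L p.1) : r (w p.1 p.2) (w (next p).1 (next p).2) := by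
    simp only [next]
    split_ifs with h
    · exact hw _ _ hp
    · simpa only [show p.2 + 1 = L p.1 by omega, hwL, hw0] using hw _ _ hp
  have run (k j : ℕ) (hj : j < L k) : next^[j] (k, 0) = (k, j) := by
    induction j with
    | zero => rfl
    | succ j ih =>
      rw [Function.iterate_succ_apply', ih (by omega)]
      exact if_pos hj
  have cross (k : ℕ) : next^[L k] (k, 0) = (k + 1, 0) := by
    obtain ⟨j, hj⟩ : ∃ j, L k = j + 1 := ⟨L k - 1, by have := hL k; omega⟩
    rw [hj, Function.iterate_succ_apply', run k j (by omega)]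
    exact if_neg (by dsimp only; omega)
  have visit (k : ℕ) : ∃ t ≥ k, pos t = (k, 0) := by
    induction k with
    | zero => exact ⟨0, le_rfl, rfl⟩
    | succ k ih =>
      obtain ⟨t, htk, ht⟩ := ih
      refine ⟨L k + t, by have := hL k; omega, ?_⟩
      simp only [pos, Function.iterate_add_apply]
      rw [show next^[t] (0, 0) = (k, 0) from ht, cross]
  refine ⟨fun t => w (pos t).1 (pos t).2, hw0 0, fun t => ?_, ?_⟩
  · simpa only [pos_succ] using step _ (pos_lt t)
  · intro k
    obtain ⟨t, htk, ht⟩ := visit k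
    exact ⟨t, htk, by simp only [ht, hw0]⟩

end Relation

open Relation

variable {n : ℕ} {f : Fin n → (Fin n → Bool) → Bool} {A B : Set (Fin n → Bool)}
  {π : ℕ → Fin n → Bool}

theorem exists_infOften (π : ℕ → Fin n → Bool) : ∃ x, InfOften π x := by
  obtain ⟨x, hx⟩ := Finite.exists_infinite_fiber π
  refine ⟨x, fun i => ?_⟩
  have : ∃ᶠ j in Filter.atTop, π j = x :=
    Nat.frequently_atTop_iff_infinite.mpr (Set.infinite_coe_iff.mp hx)
  exact Filter.frequently_atTop.mp this i

theorem IsPath.mem_bnReach (hπ : IsPath f π) {i j : ℕ} (hij : i ≤ j) : π j ∈ BNReach f (π i) := by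
  induction j, hij using Nat.le_induction with
  | base => exact ReflTransGen.refl
  | succ j _ ih => exact ReflTransGen.tail ih (hπ j)

theorem IsAttractor.mem_of_mem_bnReach (hA : IsAttractor f A) {s s' : Fin n → Bool} (hs : s ∈ A)
    (hs' : s' ∈ BNReach f s) : s' ∈ A :=
  hA.2 s hs ▸ hs'

theorem IsPath.mem_of_le (hπ : IsPath f π) (hA : IsAttractor f A) {i j : ℕ} (hi : π i ∈ A)
    (hij : i ≤ j) : π j ∈ A :=
  hA.mem_of_mem_bnReach hi (hπ.mem_bnReach hij)

theorem IsAttractor.eq_of_inter_nonempty (hA : IsAttractor f A) (hB : IsAttractor f B)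
    (h : (A ∩ B).Nonempty) : A = B := by
  obtain ⟨s, hsA, hsB⟩ := h
  rw [← hA.2 s hsA, hB.2 s hsB]

theorem exists_isAttractor_subset_bnReach (f : Fin n → (Fin n → Bool) → Bool) (s : Fin n → Bool) :
    ∃ B, IsAttractor f B ∧ B ⊆ BNReach f s := by
  -- a reachable set of minimal size admits no proper reachable subset, so it is an attractor
  obtain ⟨y, hy, hmin⟩ := Set.exists_min_image (BNReach f s) (fun z => (BNReach f z).ncard)
    (Set.toFinite _) ⟨s, ReflTransGen.refl⟩
  refine ⟨BNReach f y, ⟨⟨y, ReflTransGen.refl⟩, fun z hz => ?_⟩, fun w hw => hy.trans hw⟩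
  exact Set.eq_of_subset_of_ncard_le (fun w hw => ReflTransGen.trans hz hw) (hmin z (hy.trans hz))
    (Set.toFinite _)

theorem IsAttractor.transGen (hn : 1 ≤ n) (hA : IsAttractor f A) {a b : Fin n → Bool}
    (ha : a ∈ A) (hb : b ∈ A) : TransGen (BNStep f) a b := by
  let i : Fin n := ⟨0, hn⟩
  have hstep : BNStep f a (Function.update a i (f i a)) := ⟨i, rfl⟩
  have hsucc : Function.update a i (f i a) ∈ A := hA.mem_of_mem_bnReach ha (.single hstep)
  have hsucc_b : b ∈ BNReach f (Function.update a i (f i a)) := (hA.2 _ hsucc).symm ▸ hb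
  exact TransGen.head' hstep hsucc_b

theorem Fair.isAttractor_setOf_infOften (hπ : IsPath f π) (hfair : Fair f π) :
    IsAttractor f {x | InfOften π x} := by
  refine ⟨exists_infOften π, fun z hz => Set.Subset.antisymm (fun w hw => ?_) (fun w hw => ?_)⟩
  · induction hw with
    | refl => exact hz
    | tail _ hstep ih => exact hfair _ ih _ hstep
  · obtain ⟨i, -, rfl⟩ := hz 0
    obtain ⟨j, hij, rfl⟩ := hw i
    exact hπ.mem_bnReach hij

theorem Fair.exists_mem_of_mem_basS (hπ : IsPath f π) (hfair : Fair f π) (hx : π 0 ∈ basS f A) :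
    ∃ k, π k ∈ A := by
  have hI := hfair.isAttractor_setOf_infOften hπ
  obtain ⟨y, hy⟩ := hI.1
  obtain ⟨k, -, hk⟩ := hy 0
  have hyx : y ∈ BNReach f (π 0) := hk ▸ hπ.mem_bnReach k.zero_le
  have hIA : {x | InfOften π x} = A := by
    by_contra hne
    exact (hx.2 _ hI hne).subset ⟨hyx, hy⟩
  exact ⟨k, hk ▸ hIA ▸ hy⟩

theorem IsAttractor.fair_of_forall_infOften (hB : IsAttractor f B) (hπ : IsPath f π)
    (hinf : ∀ b ∈ B, InfOften π b) : Fair f π := by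
  intro x hx x' hxx'
  obtain ⟨b, hb⟩ := hB.1
  obtain ⟨t, -, htb⟩ := hinf b hb 0
  obtain ⟨j, hj, rfl⟩ := hx t
  have hxB : π j ∈ B := hπ.mem_of_le hB (htb ▸ hb) hj
  exact hinf x' (hB.mem_of_mem_bnReach hxB (.single hxx'))

/-- The targets after `x` list the states of `B` along `k ↦ g k.unpair.1` for a surjection `g`,
so each of them recurs infinitely often. -/
theorem IsAttractor.exists_path_infOften (hn : 1 ≤ n) (hB : IsAttractor f B) {x : Fin n → Bool}
    (hxB : (BNReach f x ∩ B).Nonempty) :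
    ∃ π, π 0 = x ∧ IsPath f π ∧ ∀ b ∈ B, InfOften π b := by
  obtain ⟨y, hxy, hyB⟩ := hxB
  have : Nonempty B := ⟨⟨y, hyB⟩⟩
  obtain ⟨g, hg⟩ := exists_surjective_nat B
  let e : ℕ → Fin n → Bool := fun | 0 => x | k + 1 => g k.unpair.1
  have he : ∀ k, TransGen (BNStep f) (e k) (e (k + 1))
    | 0 => TransGen.trans_right hxy (hB.transGen hn hyB (g _).2)
    | _ + 1 => hB.transGen hn (g _).2 (g _).2
  obtain ⟨π, hπ0, hπ, hvisit⟩ := exists_path_through_of_transGen e he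
  refine ⟨π, hπ0, hπ, fun b hb i => ?_⟩
  obtain ⟨m, hm⟩ := hg ⟨b, hb⟩
  obtain ⟨t, ht, hte⟩ := hvisit (Nat.pair m i + 1)
  refine ⟨t, (Nat.right_le_pair m i).trans (by omega), ?_⟩
  simp only [hte, e, Nat.unpair_pair, hm]

theorem IsAttractor.eq_of_forall_fair_exists_mem (hn : 1 ≤ n) (hA : IsAttractor f A)
    (hB : IsAttractor f B) {x : Fin n → Bool}
    (h : ∀ π : ℕ → Fin n → Bool, π 0 = x → IsPath f π → Fair f π → ∃ k, π k ∈ A)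
    (hxB : (BNReach f x ∩ B).Nonempty) : B = A := by
  obtain ⟨π, hπ0, hπ, hinf⟩ := hB.exists_path_infOften hn hxB
  obtain ⟨k, hk⟩ := h π hπ0 hπ (hB.fair_of_forall_infOften hπ hinf)
  obtain ⟨b, hb⟩ := hB.1
  obtain ⟨t, hkt, rfl⟩ := hinf b hb k
  exact hB.eq_of_inter_nonempty hA ⟨π t, hb, hπ.mem_of_le hA hk hkt⟩

/-- fair-path characterization of the strong basin: `x ∈ basS A`
iff every fair infinite path from `x` eventually visits `A`. -/
theorem strong_basin_fair_path_characterization {n : ℕ} (hn : 1 ≤ n)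
    (f : Fin n → (Fin n → Bool) → Bool) (A : Set (Fin n → Bool))
    (hA : IsAttractor f A) (x : Fin n → Bool) :
    x ∈ basS f A ↔
      ∀ π : ℕ → Fin n → Bool, π 0 = x → IsPath f π → Fair f π →
        ∃ k : ℕ, π k ∈ A := by
  constructor
  · rintro hx π rfl hπ hfair
    exact hfair.exists_mem_of_mem_basS hπ hx
  · intro h
    have hreach : ∀ B, IsAttractor f B → (BNReach f x ∩ B).Nonempty → B = A :=
      fun _ hB => hA.eq_of_forall_fair_exists_mem hn hB h
    refine ⟨?_, fun A' hA' hne => Set.not_nonempty_iff_eq_empty.mp (hne ∘ hreach A' hA')⟩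
    obtain ⟨B, hB, hBx⟩ := exists_isAttractor_subset_bnReach f x
    obtain ⟨b, hb⟩ := hB.1
    have hxb : b ∈ BNReach f x ∩ B := ⟨hBx hb, hb⟩
    exact hreach B hB ⟨b, hxb⟩ ▸ ⟨b, hxb⟩
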